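/- Let S = {S_1,...,S_t} be an (A,Ψ)-frame over [n] (with parameters r ≥ 1, δ ≥ 2, partition {A_1,...,A_α, B} of [t], and Ψ = {ξ_1,...,ξ_α} ⊆ [n]), let k ≥ 1, and let Ω_0 be defined by fixing, for each j ∈ {1,...,α} and i ∈ A_j, an r-element subset U_i ⊆ S_i with ξ_j ∈ U_i, and for each i ∈ B an r-element subset U_i ⊆ S_i, and setting Ω_0 = ∪_{i∈[t]} U_i. Let F_q be a finite field with q ≥ C(n, k−1) (the binomial coefficient n choose k−1). Suppose Ω_0 ⊆ Ω ⊆ [n] and vectors G_ℓ ∈ F_q^k for ℓ ∈ Ω are such that for every (S,r,k)-core S ⊆ Ω the vectors {G_ℓ : ℓ ∈ S} are linearly independent. If i ∈ [t] with S_i \ Ω ≠ ∅, then for any λ ∈ S_i \ Ω there exists a vector G_λ in the span of {G_ℓ : ℓ ∈ S_i ∩ Ω} such that for every (S,r,k)-core S ⊆ Ω ∪ {λ} the vectors {G_ℓ : ℓ ∈ S} are linearly independent. -/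

import Mathlib

/-- `S = {S_1,…,S_t}` is an `(A,Ψ)`-frame over `[n]`, with blocks `A_1,…,A_a, B`
partitioning `[t]` and `Ψ = {ξ_1,…,ξ_a} ⊆ [n]`. -/
def IsFrame {n t a : ℕ} (r δ : ℕ) (S : Fin t → Finset (Fin n))
    (A : Fin a → Finset (Fin t)) (B : Finset (Fin t)) (ξ : Fin a → Fin n) : Prop :=
  (∀ i : Fin t, (S i).card = r + δ - 1) ∧
  -- {A_1,…,A_a, B} is a partition of [t]
  (∀ j₁ j₂ : Fin a, j₁ ≠ j₂ → Disjoint (A j₁) (A j₂)) ∧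
  (∀ j : Fin a, Disjoint (A j) B) ∧
  ((Finset.univ.biUnion A) ∪ B = Finset.univ) ∧
  -- frame condition (1): ∩_{ℓ∈A_j} S_ℓ = {ξ_j}, and the S_i \ {ξ_j}, i ∈ A_j, are disjoint
  (∀ j : Fin a, ∀ x : Fin n, (∀ ℓ ∈ A j, x ∈ S ℓ) ↔ x = ξ j) ∧
  (∀ j : Fin a, ∀ i₁ ∈ A j, ∀ i₂ ∈ A j, i₁ ≠ i₂ →
    Disjoint (S i₁ \ {ξ j}) (S i₂ \ {ξ j})) ∧
  -- frame condition (2): the ∪_{ℓ∈A_j} S_ℓ together with the S_j, j ∈ B, partition [n]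
  (∀ j₁ j₂ : Fin a, j₁ ≠ j₂ → Disjoint ((A j₁).biUnion S) ((A j₂).biUnion S)) ∧
  (∀ j : Fin a, ∀ i ∈ B, Disjoint ((A j).biUnion S) (S i)) ∧
  (∀ i₁ ∈ B, ∀ i₂ ∈ B, i₁ ≠ i₂ → Disjoint (S i₁) (S i₂)) ∧
  (Finset.univ.biUnion S = Finset.univ)

/-- `T` is an `(S,r)`-core. -/
def IsCore {n t a : ℕ} (S : Fin t → Finset (Fin n))
    (A : Fin a → Finset (Fin t)) (B : Finset (Fin t)) (ξ : Fin a → Fin n)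
    (r : ℕ) (T : Finset (Fin n)) : Prop :=
  (∀ j : Fin a, ξ j ∈ T → ∀ i ∈ A j, (T ∩ S i).card ≤ r) ∧
  (∀ j : Fin a, ξ j ∉ T → ∃ ij ∈ A j, (T ∩ S ij).card ≤ r ∧
    ∀ i ∈ A j, i ≠ ij → (T ∩ S i).card ≤ r - 1) ∧
  (∀ i ∈ B, (T ∩ S i).card ≤ r)

/-!
A core `T ⊆ Ω ∪ {λ}` through `λ` becomes a core inside `Ω` when `λ` is exchanged for a suitable
`μ ∈ U_i`: a point of `U_i \ T` that is no `ξ_j`, or `ξ_j` itself when `S_i` is the distinguished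
set `S_{i_j}` of condition (ii). So `G` is independent on `T \ {λ}`, and `G_μ`, which lies in
`W := span G(S_i ∩ Ω)`, is outside the span of `G(T \ {λ})`. There are at most
`C(|Ω|, k-1) < q` such cores (as `|Ω| < n`), and fewer than `q` subspaces not containing `W`
cannot cover `W`: any `G_λ ∈ W` outside all of them works.
-/

open Finset

lemma Nat.choose_lt_of_lt_of_choose_le {m n k q : ℕ} (hmn : m < n) (h : n.choose k ≤ q)
    (hq : 2 ≤ q) : m.choose k < q := by
  obtain ⟨n, rfl⟩ : ∃ n', n = n' + 1 := ⟨n - 1, by omega⟩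
  refine (Nat.choose_le_choose k (Nat.le_of_lt_succ hmn)).trans_lt ?_
  cases k with
  | zero => simp only [Nat.choose_zero_right]; omega
  | succ k =>
    rw [Nat.choose_succ_succ'] at h
    by_cases hkn : n < k + 1
    · rw [Nat.choose_eq_zero_of_lt hkn]; omega
    · have := Nat.choose_pos (n := n) (k := k) (by omega)
      omega

lemma Finset.card_le_choose_of_forall_mem_subset_insert {α : Type*} [DecidableEq α]
    {𝒯 : Finset (Finset α)} {Ω : Finset α} {a : α} {m : ℕ}
    (h : ∀ T ∈ 𝒯, T ⊆ insert a Ω ∧ a ∈ T ∧ T.card = m) : 𝒯.card ≤ Ω.card.choose (m - 1) := by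
  rw [← card_powersetCard]
  refine card_le_card_of_injOn (·.erase a) (fun T hT => ?_) fun T₁ h₁ T₂ h₂ he => ?_
  · obtain ⟨hT, haT, hTm⟩ := h T hT
    exact mem_powersetCard.mpr ⟨subset_insert_iff.mp hT, by rw [card_erase_of_mem haT, hTm]⟩
  · rw [← insert_erase (h T₁ h₁).2.1, ← insert_erase (h T₂ h₂).2.1]
    exact congrArg (insert a) he

lemma Submodule.exists_mem_forall_notMem_of_card_lt {ι K M : Type*} [Fintype ι] [Field K]
    [AddCommGroup M] [Module K M] (W : Submodule K M) (p : ι → Submodule K M)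
    (hp : ∀ i, ¬ W ≤ p i) (hcard : Fintype.card ι < ENat.card K) :
    ∃ x ∈ W, ∀ i, x ∉ p i := by
  have hne : ∀ i, (p i).comap W.subtype ≠ ⊤ := fun i => by
    rw [Ne, Submodule.comap_subtype_eq_top]; exact hp i
  obtain ⟨x, -, hx⟩ := Set.exists_of_ssubset
    (iUnion_ssubset_of_forall_ne_top_of_card_lt univ _ hne (by simpa using hcard))
  simp only [mem_univ, Set.iUnion_true, Set.mem_iUnion, not_exists] at hx
  exact ⟨x, x.2, hx⟩

lemma LinearIndepOn.insert_update {ι K M : Type*} [DecidableEq ι] [DivisionRing K]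
    [AddCommGroup M] [Module K M] {f : ι → M} {s : Set ι} {a : ι} {v : M}
    (hs : LinearIndepOn K f s) (ha : a ∉ s) (hv : v ∉ Submodule.span K (f '' s)) :
    LinearIndepOn K (Function.update f a v) (insert a s) := by
  have heq : Set.EqOn f (Function.update f a v) s := fun x hx =>
    (Function.update_of_ne (ne_of_mem_of_not_mem hx ha) v f).symm
  rw [linearIndepOn_insert ha, Function.update_self, ← Set.image_congr heq]
  exact ⟨hs.congr heq, hv⟩

theorem exists_mem_forall_linearIndepOn_update {ι K M : Type*} [DecidableEq ι] [Field K]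
    [AddCommGroup M] [Module K M] (W : Submodule K M) (f : ι → M) (a : ι)
    (𝒯 : Finset (Finset ι)) (ha : ∀ T ∈ 𝒯, a ∈ T)
    (hswap : ∀ T ∈ 𝒯, ∃ μ ∉ T.erase a, f μ ∈ W ∧ LinearIndepOn K f ↑(insert μ (T.erase a)))
    (hcard : 𝒯.card < ENat.card K) :
    ∃ v ∈ W, ∀ T ∈ 𝒯, LinearIndepOn K (Function.update f a v) ↑T := by
  have h𝒯 : ∀ T ∈ 𝒯, LinearIndepOn K f ↑(T.erase a) ∧
      ¬ W ≤ Submodule.span K (f '' ↑(T.erase a)) := by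
    intro T hT
    obtain ⟨μ, hμ, hμW, hindep⟩ := hswap T hT
    rw [coe_insert, linearIndepOn_insert (mem_coe.not.mpr hμ)] at hindep
    exact ⟨hindep.1, fun hle => hindep.2 (hle hμW)⟩
  obtain ⟨v, hvW, hv⟩ := W.exists_mem_forall_notMem_of_card_lt
    (fun T : 𝒯 => Submodule.span K (f '' ↑(T.1.erase a))) (fun T => (h𝒯 T T.2).2)
    (by simpa using hcard)
  refine ⟨v, hvW, fun T hT => ?_⟩
  have := (h𝒯 T hT).1.insert_update (mem_coe.not.mpr (notMem_erase a T)) (hv ⟨T, hT⟩)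
  rwa [← coe_insert, insert_erase (ha T hT)] at this

namespace Finset

variable {α : Type*} [DecidableEq α] {T s : Finset α} {x y : α}

lemma card_insert_inter_le_succ (X : Finset α) : (insert y X ∩ s).card ≤ (X ∩ s).card + 1 :=
  calc (insert y X ∩ s).card ≤ (insert y (X ∩ s)).card := by
        rw [insert_inter_distrib]
        exact card_le_card (inter_subset_inter_left (subset_insert y s))
    _ ≤ (X ∩ s).card + 1 := card_insert_le _ _

lemma card_insert_erase_inter_le_succ : (insert y (T.erase x) ∩ s).card ≤ (T ∩ s).card + 1 :=
  (card_insert_inter_le_succ _).trans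
    (Nat.add_le_add_right (card_le_card (inter_subset_inter_right (erase_subset x T))) 1)

lemma card_insert_erase_inter_le_of_notMem (hy : y ∉ s) :
    (insert y (T.erase x) ∩ s).card ≤ (T ∩ s).card := by
  rw [insert_inter_of_notMem hy]
  exact card_le_card (inter_subset_inter_right (erase_subset x T))

lemma card_insert_erase_inter_le_of_mem (hx : x ∈ T ∩ s) :
    (insert y (T.erase x) ∩ s).card ≤ (T ∩ s).card :=
  calc (insert y (T.erase x) ∩ s).card ≤ ((T ∩ s).erase x).card + 1 := by
        rw [← erase_inter]; exact card_insert_inter_le_succ _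
    _ = (T ∩ s).card := card_erase_add_one hx

end Finset

section

variable {n t a r δ : ℕ} {S : Fin t → Finset (Fin n)} {A : Fin a → Finset (Fin t)}
  {B : Finset (Fin t)} {ξ : Fin a → Fin n} {T T' : Finset (Fin n)}

lemma IsCore.card_inter_le_of_mem (hT : IsCore S A B ξ r T) {j : Fin a} {m : Fin t}
    (hm : m ∈ A j) : (T ∩ S m).card ≤ r := by
  by_cases hξ : ξ j ∈ T
  · exact hT.1 j hξ m hm
  · obtain ⟨ij, -, hij, hrest⟩ := hT.2.1 j hξ
    rcases eq_or_ne m ij with rfl | hne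
    · exact hij
    · exact (hrest m hm hne).trans (Nat.sub_le r 1)

lemma IsCore.of_card_inter_le (hT : IsCore S A B ξ r T)
    (hcard : ∀ m, (T' ∩ S m).card ≤ (T ∩ S m).card) (hξ : ∀ j, ξ j ∈ T → ξ j ∈ T') :
    IsCore S A B ξ r T' := by
  refine ⟨fun j _ m hm => (hcard m).trans (hT.card_inter_le_of_mem hm), fun j hj => ?_,
    fun m hm => (hcard m).trans (hT.2.2 m hm)⟩
  obtain ⟨ij, hijA, hij, hrest⟩ := hT.2.1 j (mt (hξ j) hj)
  exact ⟨ij, hijA, (hcard ij).trans hij, fun m hm hne => (hcard m).trans (hrest m hm hne)⟩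

end

namespace IsFrame

variable {n t a r δ : ℕ} {S : Fin t → Finset (Fin n)} {A : Fin a → Finset (Fin t)}
  {B : Finset (Fin t)} {ξ : Fin a → Fin n}

lemma disjoint_A (hS : IsFrame r δ S A B ξ) {j₁ j₂ : Fin a} (h : j₁ ≠ j₂) :
    Disjoint (A j₁) (A j₂) :=
  hS.2.1 j₁ j₂ h

lemma disjoint_A_B (hS : IsFrame r δ S A B ξ) (j : Fin a) : Disjoint (A j) B :=
  hS.2.2.1 j

lemma mem_A_or_mem_B (hS : IsFrame r δ S A B ξ) (m : Fin t) : (∃ j, m ∈ A j) ∨ m ∈ B := by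
  have hm : m ∈ univ.biUnion A ∪ B := hS.2.2.2.1 ▸ mem_univ m
  simpa using hm

lemma forall_mem_iff (hS : IsFrame r δ S A B ξ) (j : Fin a) (x : Fin n) :
    (∀ ℓ ∈ A j, x ∈ S ℓ) ↔ x = ξ j :=
  hS.2.2.2.2.1 j x

lemma xi_mem (hS : IsFrame r δ S A B ξ) {j : Fin a} {m : Fin t} (hm : m ∈ A j) : ξ j ∈ S m :=
  (hS.forall_mem_iff j (ξ j)).mpr rfl m hm

lemma A_nonempty [Nontrivial (Fin n)] (hS : IsFrame r δ S A B ξ) (j : Fin a) :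
    (A j).Nonempty := by
  by_contra h
  rw [not_nonempty_iff_eq_empty] at h
  have hall : ∀ x, x = ξ j := fun x => (hS.forall_mem_iff j x).mp (by simp [h])
  obtain ⟨x, y, hxy⟩ := exists_pair_ne (Fin n)
  exact hxy ((hall x).trans (hall y).symm)

lemma mem_A_of_xi_mem (hS : IsFrame r δ S A B ξ) {j : Fin a} (hA : (A j).Nonempty) {m : Fin t}
    (h : ξ j ∈ S m) : m ∈ A j := by
  obtain ⟨ℓ, hℓ⟩ := hA
  have hξℓ : ξ j ∈ (A j).biUnion S := mem_biUnion.mpr ⟨ℓ, hℓ, hS.xi_mem hℓ⟩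
  have hm := hS.mem_A_or_mem_B m
  obtain ⟨-, -, -, -, -, -, hAA, hAB, -, -⟩ := hS
  rcases hm with ⟨j', hm⟩ | hm
  · by_contra hmj
    have hjj : j' ≠ j := fun h => hmj (h ▸ hm)
    exact disjoint_left.mp (hAA j' j hjj) (mem_biUnion.mpr ⟨m, hm, h⟩) hξℓ
  · exact absurd h (disjoint_left.mp (hAB j m hm) hξℓ)

lemma eq_of_mem_of_mem (hS : IsFrame r δ S A B ξ) {m₁ m₂ : Fin t} {x : Fin n}
    (h₁ : x ∈ S m₁) (h₂ : x ∈ S m₂) (hx : ∀ j, x ≠ ξ j) : m₁ = m₂ := by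
  have hm₁ := hS.mem_A_or_mem_B m₁
  have hm₂ := hS.mem_A_or_mem_B m₂
  obtain ⟨-, -, -, -, -, hSA, hAA, hAB, hBB, -⟩ := hS
  by_contra hne
  rcases hm₁ with ⟨j₁, hj₁⟩ | hb₁ <;> rcases hm₂ with ⟨j₂, hj₂⟩ | hb₂
  · rcases eq_or_ne j₁ j₂ with rfl | hjj
    · have hx' : x ∉ ({ξ j₁} : Finset (Fin n)) := by simpa using hx j₁
      exact disjoint_left.mp (hSA j₁ m₁ hj₁ m₂ hj₂ hne) (mem_sdiff.mpr ⟨h₁, hx'⟩)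
        (mem_sdiff.mpr ⟨h₂, hx'⟩)
    · exact disjoint_left.mp (hAA j₁ j₂ hjj) (mem_biUnion.mpr ⟨m₁, hj₁, h₁⟩)
        (mem_biUnion.mpr ⟨m₂, hj₂, h₂⟩)
  · exact disjoint_left.mp (hAB j₁ m₂ hb₂) (mem_biUnion.mpr ⟨m₁, hj₁, h₁⟩) h₂
  · exact disjoint_left.mp (hAB j₂ m₁ hb₁) (mem_biUnion.mpr ⟨m₂, hj₂, h₂⟩) h₁
  · exact disjoint_left.mp (hBB m₁ hb₁ m₂ hb₂ hne) h₁ h₂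

variable {T : Finset (Fin n)} {i : Fin t} {x y : Fin n}

lemma isCore_insert_erase (hS : IsFrame r δ S A B ξ) (hT : IsCore S A B ξ r T) (hx : x ∈ T)
    (hxS : x ∈ S i) (hxξ : ∀ j, x ≠ ξ j) (hyS : y ∈ S i) (hyξ : ∀ j, y ≠ ξ j) :
    IsCore S A B ξ r (insert y (T.erase x)) := by
  refine hT.of_card_inter_le (fun m => ?_) fun j h => mem_insert_of_mem (mem_erase.mpr ⟨?_, h⟩)
  · by_cases hym : y ∈ S m
    · obtain rfl := hS.eq_of_mem_of_mem hyS hym hyξ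
      exact card_insert_erase_inter_le_of_mem (mem_inter.mpr ⟨hx, hxS⟩)
    · exact card_insert_erase_inter_le_of_notMem hym
  · exact (hxξ j).symm

lemma isCore_insert_xi_erase (hS : IsFrame r δ S A B ξ) (hr : 1 ≤ r) (hT : IsCore S A B ξ r T)
    (hx : x ∈ T) (hxS : x ∈ S i) (hxξ : ∀ j, x ≠ ξ j) {j : Fin a} (hi : i ∈ A j)
    (hTi : (T ∩ S i).card ≤ r) (hrest : ∀ m ∈ A j, m ≠ i → (T ∩ S m).card ≤ r - 1) :
    IsCore S A B ξ r (insert (ξ j) (T.erase x)) := by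
  set T' := insert (ξ j) (T.erase x)
  have hout : ∀ m ∉ A j, (T' ∩ S m).card ≤ (T ∩ S m).card := fun m hm =>
    card_insert_erase_inter_le_of_notMem fun h => hm (hS.mem_A_of_xi_mem ⟨i, hi⟩ h)
  have hin : ∀ m ∈ A j, (T' ∩ S m).card ≤ r := by
    intro m hm
    rcases eq_or_ne m i with rfl | hmi
    · exact (card_insert_erase_inter_le_of_mem (mem_inter.mpr ⟨hx, hxS⟩)).trans hTi
    · have := hrest m hm hmi
      have : (T' ∩ S m).card ≤ (T ∩ S m).card + 1 := card_insert_erase_inter_le_succ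
      omega
  have hA : ∀ {j'}, j' ≠ j → ∀ m ∈ A j', m ∉ A j := fun hjj m hm =>
    disjoint_left.mp (hS.disjoint_A hjj) hm
  refine ⟨fun j' _ m hm => ?_, fun j' hj' => ?_, fun m hm => ?_⟩
  · rcases eq_or_ne j' j with rfl | hjj
    · exact hin m hm
    · exact (hout m (hA hjj m hm)).trans (hT.card_inter_le_of_mem hm)
  · have hjj : j' ≠ j := by rintro rfl; exact hj' (mem_insert_self _ _)
    have hξT : ξ j' ∉ T := fun h =>
      hj' (mem_insert_of_mem (mem_erase.mpr ⟨(hxξ j').symm, h⟩))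
    obtain ⟨ij, hijA, hij, hrest'⟩ := hT.2.1 j' hξT
    exact ⟨ij, hijA, (hout ij (hA hjj ij hijA)).trans hij, fun m hm hne =>
      (hout m (hA hjj m hm)).trans (hrest' m hm hne)⟩
  · exact (hout m (disjoint_right.mp (hS.disjoint_A_B j) hm)).trans (hT.2.2 m hm)

lemma forall_ne_xi [Nontrivial (Fin n)] (hS : IsFrame r δ S A B ξ) (hy : y ∈ S i)
    (h : ∀ j, i ∈ A j → y ≠ ξ j) (j : Fin a) : y ≠ ξ j := fun hyj =>
  h j (hS.mem_A_of_xi_mem (hS.A_nonempty j) (hyj ▸ hy)) hyj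

theorem exists_swap (hS : IsFrame r δ S A B ξ) (hr : 1 ≤ r) {U : Finset (Fin n)}
    (hUS : U ⊆ S i) (hU : U.card = r) (hUξ : ∀ j, i ∈ A j → ξ j ∈ U)
    (hx : x ∈ S i \ U) (hT : IsCore S A B ξ r T) (hxT : x ∈ T) :
    ∃ μ ∈ U, μ ∉ T ∧ IsCore S A B ξ r (insert μ (T.erase x)) := by
  obtain ⟨hxS, hxU⟩ := mem_sdiff.mp hx
  have : Nontrivial (Fin n) := by
    obtain ⟨u, hu⟩ := card_pos.mp (hU ▸ hr : 0 < U.card)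
    exact ⟨⟨x, u, fun h => hxU (h ▸ hu)⟩⟩
  have hxξ := hS.forall_ne_xi hxS fun j hj h => hxU (h ▸ hUξ j hj)
  have hUT : (T ∩ U).card < (T ∩ S i).card :=
    card_lt_card ⟨inter_subset_inter_left hUS,
      fun h => hxU (mem_inter.mp (h (mem_inter.mpr ⟨hxT, hxS⟩))).2⟩
  have hpick : ∀ X : Finset (Fin n), (X ∩ U).card < r → ∃ μ ∈ U, μ ∉ X := fun X h => by
    obtain ⟨μ, hμU, hμX⟩ := exists_mem_notMem_of_card_lt_card (hU ▸ h)
    exact ⟨μ, hμU, fun h => hμX (mem_inter.mpr ⟨h, hμU⟩)⟩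
  have hswap : ∀ μ ∈ U, μ ∉ T → (∀ j, i ∈ A j → μ ≠ ξ j) →
      ∃ μ ∈ U, μ ∉ T ∧ IsCore S A B ξ r (insert μ (T.erase x)) := fun μ hμU hμT hμξ =>
    ⟨μ, hμU, hμT, hS.isCore_insert_erase hT hxT hxS hxξ (hUS hμU) (hS.forall_ne_xi (hUS hμU) hμξ)⟩
  rcases hS.mem_A_or_mem_B i with ⟨j, hij⟩ | hiB
  · have hA : ∀ j', i ∈ A j' → j' = j := fun j' hij' =>
      by_contra fun hne => disjoint_left.mp (hS.disjoint_A hne) hij' hij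
    by_cases hξT : ξ j ∈ T
    · obtain ⟨μ, hμU, hμT⟩ := hpick T (by have := hT.1 j hξT i hij; omega)
      exact hswap μ hμU hμT fun j' hij' h => by obtain rfl := hA j' hij'; exact hμT (h ▸ hξT)
    obtain ⟨ij, hijA, hij', hrest⟩ := hT.2.1 j hξT
    rcases eq_or_ne ij i with rfl | hne
    · exact ⟨ξ j, hUξ j hij, hξT, hS.isCore_insert_xi_erase hr hT hxT hxS hxξ hij hij' hrest⟩
    · have hTi := hrest i hij hne.symm
      have := card_insert_inter_le_succ (y := ξ j) (s := U) T
      obtain ⟨μ, hμU, hμX⟩ := hpick (insert (ξ j) T) (by omega)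
      exact hswap μ hμU (fun h => hμX (mem_insert_of_mem h))
        fun j' hij' h => by obtain rfl := hA j' hij'; exact hμX (h ▸ mem_insert_self _ _)
  · obtain ⟨μ, hμU, hμT⟩ := hpick T (by have := hT.2.2 i hiB; omega)
    exact hswap μ hμU hμT fun j hij => absurd hiB (disjoint_left.mp (hS.disjoint_A_B j) hij)

end IsFrame

theorem statement16_general {n t a k r δ : ℕ} {F : Type} [Field F] [Fintype F]
    (hr1 : 1 ≤ r)
    (hq : n.choose (k - 1) ≤ Fintype.card F)
    (S : Fin t → Finset (Fin n)) (A : Fin a → Finset (Fin t)) (B : Finset (Fin t))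
    (ξ : Fin a → Fin n) (hframe : IsFrame r δ S A B ξ)
    (U : Fin t → Finset (Fin n))
    (hUsub : ∀ i : Fin t, U i ⊆ S i) (hUcard : ∀ i : Fin t, (U i).card = r)
    (hUξ : ∀ j : Fin a, ∀ i ∈ A j, ξ j ∈ U i)
    (Ω : Finset (Fin n)) (hΩ : Finset.univ.biUnion U ⊆ Ω)
    (G : Fin n → (Fin k → F))
    (hind : ∀ T ⊆ Ω, IsCore S A B ξ r T → T.card = k →
      LinearIndependent F (fun ℓ : {x // x ∈ T} => G ℓ.1))
    (i : Fin t) (lam : Fin n) (hlam : lam ∈ S i \ Ω) :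
    ∃ Glam : Fin k → F,
      Glam ∈ Submodule.span F (G '' ((S i ∩ Ω : Finset (Fin n)) : Set (Fin n))) ∧
      ∀ T ⊆ insert lam Ω, IsCore S A B ξ r T → T.card = k →
        LinearIndependent F (fun ℓ : {x // x ∈ T} => Function.update G lam Glam ℓ.1) := by
  classical
  have hUΩ : ∀ m, U m ⊆ Ω := fun m => (subset_biUnion_of_mem U (mem_univ m)).trans hΩ
  let cores := (insert lam Ω).powerset.filter
    (fun T => lam ∈ T ∧ IsCore S A B ξ r T ∧ T.card = k)
  have hcores : ∀ T ∈ cores, T ⊆ insert lam Ω ∧ lam ∈ T ∧ IsCore S A B ξ r T ∧ T.card = k :=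
    fun T hT => by simpa [cores] using hT
  have hswap : ∀ T ∈ cores, ∃ μ ∉ T.erase lam,
      G μ ∈ Submodule.span F (G '' ((S i ∩ Ω : Finset (Fin n)) : Set (Fin n))) ∧
      LinearIndepOn F G ↑(insert μ (T.erase lam)) := by
    intro T hT
    obtain ⟨hTsub, hlamT, hTcore, hTk⟩ := hcores T hT
    obtain ⟨μ, hμU, hμT, hμcore⟩ := hframe.exists_swap hr1 (hUsub i) (hUcard i) (hUξ · i)
      (sdiff_subset_sdiff subset_rfl (hUΩ i) hlam) hTcore hlamT
    have hμT' : μ ∉ T.erase lam := fun h => hμT (mem_of_mem_erase h)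
    refine ⟨μ, hμT', Submodule.subset_span ⟨μ, mem_inter.mpr ⟨hUsub i hμU, hUΩ i hμU⟩, rfl⟩,
      hind _ (insert_subset (hUΩ i hμU) (subset_insert_iff.mp hTsub)) hμcore ?_⟩
    rw [card_insert_of_notMem hμT', card_erase_add_one hlamT, hTk]
  have hΩn : Ω.card < n := by simpa using card_lt_univ_of_notMem (mem_sdiff.mp hlam).2
  have hcard : cores.card < ENat.card F := by
    rw [ENat.card_eq_coe_fintype_card, Nat.cast_lt]
    exact (card_le_choose_of_forall_mem_subset_insert fun T hT =>
      ⟨(hcores T hT).1, (hcores T hT).2.1, (hcores T hT).2.2.2⟩).trans_lt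
      (Nat.choose_lt_of_lt_of_choose_le hΩn hq Fintype.one_lt_card)
  obtain ⟨g, hgW, hg⟩ := exists_mem_forall_linearIndepOn_update _ G lam cores
    (fun T hT => (hcores T hT).2.1) hswap hcard
  refine ⟨g, hgW, fun T hTsub hT hTk => ?_⟩
  by_cases hlamT : lam ∈ T
  · exact hg T (by simpa [cores] using ⟨hTsub, hlamT, hT, hTk⟩)
  · have hTindep : LinearIndepOn F G ↑T :=
      hind T ((subset_insert_iff_of_notMem hlamT).mp hTsub) hT hTk
    exact hTindep.congr fun y hy => (Function.update_of_ne (ne_of_mem_of_not_mem hy hlamT) g G).symm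

/-- Lemma `code-extd`: with `Ω_0 = ∪_{i∈[t]} U_i` as in Remark
`nor-core`, `q ≥ C(n,k-1)`, `Ω_0 ⊆ Ω ⊆ [n]`, and vectors `G_ℓ ∈ F_q^k` (`ℓ ∈ Ω`) such
that every `(S,r,k)`-core inside `Ω` indexes linearly independent vectors: if
`S_i \ Ω ≠ ∅` then for any `λ ∈ S_i \ Ω` there is `G_λ` in the span of
`{G_ℓ : ℓ ∈ S_i ∩ Ω}` such that every `(S,r,k)`-core inside `Ω ∪ {λ}` indexes linearly
independent vectors. -/
theorem statement16 {n t a k r δ : ℕ} {F : Type} [Field F] [Fintype F] [DecidableEq F]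
    (hr1 : 1 ≤ r) (hδ : 2 ≤ δ) (hk1 : 1 ≤ k)
    (hq : n.choose (k - 1) ≤ Fintype.card F)
    (S : Fin t → Finset (Fin n)) (A : Fin a → Finset (Fin t)) (B : Finset (Fin t))
    (ξ : Fin a → Fin n) (hframe : IsFrame r δ S A B ξ)
    (U : Fin t → Finset (Fin n))
    (hUsub : ∀ i : Fin t, U i ⊆ S i) (hUcard : ∀ i : Fin t, (U i).card = r)
    (hUξ : ∀ j : Fin a, ∀ i ∈ A j, ξ j ∈ U i)
    (Ω : Finset (Fin n)) (hΩ : Finset.univ.biUnion U ⊆ Ω)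
    (G : Fin n → (Fin k → F))
    (hind : ∀ T ⊆ Ω, IsCore S A B ξ r T → T.card = k →
      LinearIndependent F (fun ℓ : {x // x ∈ T} => G ℓ.1))
    (i : Fin t) (lam : Fin n) (hlam : lam ∈ S i \ Ω) :
    ∃ Glam : Fin k → F,
      Glam ∈ Submodule.span F (G '' ((S i ∩ Ω : Finset (Fin n)) : Set (Fin n))) ∧
      ∀ T ⊆ insert lam Ω, IsCore S A B ξ r T → T.card = k →
        LinearIndependent F (fun ℓ : {x // x ∈ T} => Function.update G lam Glam ℓ.1) :=
  statement16_general hr1 hq S A B ξ hframe U hUsub hUcard hUξ Ω hΩ G hind i lam hlam
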